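/- In any algebra satisfying (B1)–(B10), with ∼x := (x ∨ ¬x) ∧ ∼̇x, the De Morgan law ∼(x ∨ y) = ∼x ∧ ∼y holds for all x, y. -/

import Mathlib

/-!
Since `¬x ≤ ∼̇x` (from (B1), (B2)), the derived negation can be rewritten as
`∼x = (x ∧ ∼̇x) ∨ ¬x`. The inequality `∼(x ∨ y) ≤ ∼x` follows from (B9), (B6) and the
antitonicity of `∼̇` given by (B5). For the converse, `∼x ∧ ∼y ≤ x ∨ y ∨ ¬(x ∨ y)` is lattice
arithmetic with (B6), and `∼x ∧ ∼y ≤ ∼̇(x ∨ y)` is checked on the four meets of the expansion: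
the pure ones are (B10) and `¬(x ∨ y) ≤ ∼̇(x ∨ y)`, the mixed ones reduce to
`∼̇x ∧ ¬y ≤ ∼̇(x ∨ y)`, which comes from splitting `x = (x ∨ y) ∧ (x ∨ ¬y)` and using (B3) to
kill the second half.
-/

section

variable {A : Type*} {n s : A → A}

theorem antitone_of_map_inf_eq_sup [Lattice A]
    (hs : ∀ x y : A, s (x ⊓ y) = s x ⊔ s y) : Antitone s := fun a b hab => by
  simpa only [inf_eq_left.mpr hab] using (le_sup_right : s b ≤ s a ⊔ s b).trans (hs a b).ge

variable (n s) in
def derivedNeg [Lattice A] (x : A) : A := (x ⊔ n x) ⊓ s x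

theorem derivedNeg_sup_le_left [DistribLattice A] (B5 : ∀ x y : A, s (x ⊓ y) = s x ⊔ s y)
    (B6 : ∀ x y : A, n (x ⊔ y) = n x ⊓ n y)
    (B9 : ∀ x y : A, (x ⊔ y) ⊓ s (x ⊔ y) ≤ x ⊔ n x) (x y : A) :
    derivedNeg n s (x ⊔ y) ≤ derivedNeg n s x := by
  refine le_inf ?_ (inf_le_right.trans (antitone_of_map_inf_eq_sup B5 le_sup_left))
  rw [derivedNeg, inf_sup_right, B6]
  exact sup_le (B9 x y) (inf_le_left.trans (inf_le_left.trans le_sup_right))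

theorem inf_derivedNeg_le_sup_map_sup [DistribLattice A]
    (B6 : ∀ x y : A, n (x ⊔ y) = n x ⊓ n y) (x y : A) :
    derivedNeg n s x ⊓ derivedNeg n s y ≤ x ⊔ y ⊔ n (x ⊔ y) :=
  calc derivedNeg n s x ⊓ derivedNeg n s y ≤ (x ⊔ n x) ⊓ (y ⊔ n y) :=
        inf_le_inf inf_le_left inf_le_left
    _ ≤ (x ⊔ y ⊔ n x) ⊓ (x ⊔ y ⊔ n y) :=
        inf_le_inf (sup_le_sup_right le_sup_left _) (sup_le_sup_right le_sup_right _)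
    _ = x ⊔ y ⊔ n (x ⊔ y) := by rw [← sup_inf_left, B6]

variable [DistribLattice A] [BoundedOrder A]

theorem map_le_of_inf_eq_bot_of_sup_eq_top (B1 : ∀ x : A, x ⊓ n x = ⊥)
    (B2 : ∀ x : A, x ⊔ s x = ⊤) (x : A) : n x ≤ s x :=
  (disjoint_iff.2 (B1 x)).symm.le_of_codisjoint (codisjoint_iff.2 (B2 x))

theorem inf_le_map_sup (B1 : ∀ x : A, x ⊓ n x = ⊥) (B3 : ∀ x : A, n x ⊓ s (n x) = ⊥)
    (B5 : ∀ x y : A, s (x ⊓ y) = s x ⊔ s y) (x y : A) : s x ⊓ n y ≤ s (x ⊔ y) := by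
  have hsplit : s x = s (x ⊔ y) ⊔ s (x ⊔ n y) := by
    rw [← B5, ← sup_inf_left, B1, sup_bot_eq]
  have hkill : s (x ⊔ n y) ⊓ n y = ⊥ := by
    refine eq_bot_iff.2 ?_
    calc s (x ⊔ n y) ⊓ n y ≤ s (n y) ⊓ n y :=
          inf_le_inf_right _ (antitone_of_map_inf_eq_sup B5 le_sup_right)
      _ = ⊥ := by rw [inf_comm, B3]
  calc s x ⊓ n y = s (x ⊔ y) ⊓ n y := by rw [hsplit, inf_sup_right, hkill, sup_bot_eq]
    _ ≤ s (x ⊔ y) := inf_le_left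

theorem derivedNeg_eq_inf_sup (B1 : ∀ x : A, x ⊓ n x = ⊥) (B2 : ∀ x : A, x ⊔ s x = ⊤) (x : A) :
    derivedNeg n s x = x ⊓ s x ⊔ n x := by
  rw [derivedNeg, inf_sup_right, inf_eq_left.mpr (map_le_of_inf_eq_bot_of_sup_eq_top B1 B2 x)]

theorem inf_derivedNeg_le_map_sup (B1 : ∀ x : A, x ⊓ n x = ⊥) (B2 : ∀ x : A, x ⊔ s x = ⊤)
    (B3 : ∀ x : A, n x ⊓ s (n x) = ⊥) (B5 : ∀ x y : A, s (x ⊓ y) = s x ⊔ s y)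
    (B6 : ∀ x y : A, n (x ⊔ y) = n x ⊓ n y)
    (B10 : ∀ x y : A, x ⊓ s x ⊓ y ⊓ s y ≤ s (x ⊔ y)) (x y : A) :
    derivedNeg n s x ⊓ derivedNeg n s y ≤ s (x ⊔ y) := by
  rw [derivedNeg_eq_inf_sup B1 B2, derivedNeg_eq_inf_sup B1 B2, inf_sup_left, inf_sup_right,
    inf_sup_right]
  refine sup_le (sup_le ?_ ?_) (sup_le ?_ ?_)
  · simpa only [inf_assoc] using B10 x y
  · calc n x ⊓ (y ⊓ s y) ≤ s y ⊓ n x := le_inf (inf_le_right.trans inf_le_right) inf_le_left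
      _ ≤ s (x ⊔ y) := sup_comm x y ▸ inf_le_map_sup B1 B3 B5 y x
  · exact (inf_le_inf_right _ inf_le_right).trans (inf_le_map_sup B1 B3 B5 x y)
  · exact B6 x y ▸ map_le_of_inf_eq_bot_of_sup_eq_top B1 B2 (x ⊔ y)

end

theorem stmt_general {A : Type*} [DistribLattice A] [BoundedOrder A]
    (n s : A → A)
    (B1 : ∀ x : A, x ⊓ n x = ⊥)
    (B2 : ∀ x : A, x ⊔ s x = ⊤)
    (B3 : ∀ x : A, n x ⊓ s (n x) = ⊥)
    (B5 : ∀ x y : A, s (x ⊓ y) = s x ⊔ s y)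
    (B6 : ∀ x y : A, n (x ⊔ y) = n x ⊓ n y)
    (B9 : ∀ x y : A, (x ⊔ y) ⊓ s (x ⊔ y) ≤ x ⊔ n x)
    (B10 : ∀ x y : A, x ⊓ s x ⊓ y ⊓ s y ≤ s (x ⊔ y))
    (m : A → A) (hm : ∀ x : A, m x = (x ⊔ n x) ⊓ s x) :
    ∀ x y : A, m (x ⊔ y) = m x ⊓ m y := by
  obtain rfl : m = derivedNeg n s := funext hm
  intro x y
  refine le_antisymm (le_inf (derivedNeg_sup_le_left B5 B6 B9 x y) ?_)
    (le_inf (inf_derivedNeg_le_sup_map_sup B6 x y)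
      (inf_derivedNeg_le_map_sup B1 B2 B3 B5 B6 B10 x y))
  simpa only [sup_comm x y] using derivedNeg_sup_le_left B5 B6 B9 y x

theorem stmt {A : Type*} [DistribLattice A] [BoundedOrder A]
    (n s : A → A)
    (B1 : ∀ x : A, x ⊓ n x = ⊥)
    (B2 : ∀ x : A, x ⊔ s x = ⊤)
    (B3 : ∀ x : A, n x ⊓ s (n x) = ⊥)
    (B4 : ∀ x : A, s x ⊔ n (s x) = ⊤)
    (B5 : ∀ x y : A, s (x ⊓ y) = s x ⊔ s y)
    (B6 : ∀ x y : A, n (x ⊔ y) = n x ⊓ n y)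
    (B7 : ∀ x y : A, n (x ⊓ n y) = n x ⊔ n (n y))
    (B8 : ∀ x y : A, s (x ⊔ s y) = s x ⊓ s (s y))
    (B9 : ∀ x y : A, (x ⊔ y) ⊓ s (x ⊔ y) ≤ x ⊔ n x)
    (B10 : ∀ x y : A, x ⊓ s x ⊓ y ⊓ s y ≤ s (x ⊔ y))
    (m : A → A) (hm : ∀ x : A, m x = (x ⊔ n x) ⊓ s x) :
    ∀ x y : A, m (x ⊔ y) = m x ⊓ m y :=
  stmt_general n s B1 B2 B3 B5 B6 B9 B10 m hm
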